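/- arXiv:math/0310179 — 3 statements merged into one kernel-verified Lean document; each statement's English description precedes it below -/
import Mathlib

section
/- Let A be a uniform algebra on a compact Hausdorff space X and let x ∈ X be a point of continuity for A. Suppose E is a compact subset of X \ {x} such that {f² : f ∈ I(E)} is dense in I(E). Then x is a strong boundary point for A. -/
open Set Metric Complex

noncomputable section

variable {X : Type*} [TopologicalSpace X]

/-- A point `x` is a point of continuity for a subalgebra `A` of `C(X)` if for every compact
set `E ⊆ X \ {x}` there is `f ∈ A` with `f x = 1` and `f ≡ 0` on `E`. -/
def IsPointOfContinuity (A : Subalgebra ℂ C(X, ℂ)) (x : X) : Prop :=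
  ∀ E : Set X, IsCompact E → x ∉ E → ∃ f ∈ A, f x = 1 ∧ ∀ y ∈ E, f y = 0

/-- `I(E)`: the ideal of functions in `A` vanishing identically on `E`. -/
def vanishIdeal (A : Subalgebra ℂ C(X, ℂ)) (E : Set X) : Set C(X, ℂ) :=
  {f | f ∈ A ∧ ∀ y ∈ E, f y = 0}

/-- A point `x` is a strong boundary point for `A` if for every open neighbourhood `U` of `x`
there is `f ∈ A` with `f x = 1 = |f|_X` and `|f(y)| < 1` for `y ∉ U`. -/
def IsStrongBoundaryPoint (A : Subalgebra ℂ C(X, ℂ)) (x : X) : Prop :=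
  ∀ U : Set X, IsOpen U → x ∈ U →
    ∃ f ∈ A, f x = 1 ∧ (∀ y : X, ‖f y‖ ≤ 1) ∧ ∀ y ∉ U, ‖f y‖ < 1

/-! Density of squares in `I(E)` propagates to density of `2^k`-th powers. Normalising an
approximate `2^k`-th root of a function of `I(E)` that equals `1` at `x` and vanishes off a
neighbourhood `W` of `x` gives `u ∈ A` with `u x = 1`, `|u| ≤ c` on `X` and `|u| ≤ δ` off `W`, for
any `c > 1` and `δ > 0`. Multiplying such a `u` by a function that vanishes off `V` yields bumps:
`h x = 1`, `h = 0` off `V` and `|h| ≤ 5/4`. The strong boundary function is the limit of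
`∑ 2^{-(n+1)} hₙ`, each bump `hₙ` being supported where the partial sum is still at most
`1 - (3/4) 2^{-n}`. -/

theorem subset_closure_image_iterate {α : Type*} [TopologicalSpace α] {f : α → α}
    (hf : Continuous f) {s : Set α} (hs : s ⊆ closure (f '' s)) (n : ℕ) :
    s ⊆ closure (f^[n] '' s) := by
  induction n with
  | zero => simpa using subset_closure
  | succ n ih =>
    calc s ⊆ closure (f^[n] '' s) := ih
      _ ⊆ closure (f^[n] '' closure (f '' s)) := closure_mono (image_mono hs)
      _ ⊆ closure (f^[n + 1] '' s) := by
        rw [Function.iterate_succ, image_comp]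
        exact closure_minimal (image_closure_subset_closure_image (hf.iterate n)) isClosed_closure

theorem iterate_mul_self {M : Type*} [Monoid M] (a : M) (n : ℕ) :
    (fun b : M => b * b)^[n] a = a ^ 2 ^ n := by
  induction n with
  | zero => simp
  | succ n ih => rw [Function.iterate_succ_apply', ih, ← sq, ← pow_mul, pow_succ]

section ApproximateRoots

variable [CompactSpace X] {A : Subalgebra ℂ C(X, ℂ)} {E : Set X}

theorem exists_pow_two_pow_dist_lt
    (hdense : vanishIdeal A E ⊆ closure ((fun f => f * f) '' vanishIdeal A E))
    {h : C(X, ℂ)} (hh : h ∈ vanishIdeal A E) (k : ℕ) {η : ℝ} (hη : 0 < η) :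
    ∃ g ∈ A, dist (g ^ 2 ^ k) h < η := by
  have hk := subset_closure_image_iterate (f := fun f : C(X, ℂ) => f * f)
    (continuous_id.mul continuous_id) hdense k hh
  obtain ⟨_, ⟨g, hg, rfl⟩, hdist⟩ := Metric.mem_closure_iff.mp hk η hη
  exact ⟨g, hg.1, by rwa [iterate_mul_self, dist_comm] at hdist⟩

theorem exists_norm_pow_two_pow_le
    (hdense : vanishIdeal A E ⊆ closure ((fun f => f * f) '' vanishIdeal A E))
    {h : C(X, ℂ)} (hh : h ∈ vanishIdeal A E) {x : X} (hx : h x = 1) (k : ℕ)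
    {η : ℝ} (hη : 0 < η) (hη1 : η < 1) :
    ∃ u ∈ A, u x = 1 ∧ ∀ y, ‖u y‖ ^ 2 ^ k ≤ (‖h y‖ + η) / (1 - η) := by
  obtain ⟨g, hgA, hg⟩ := exists_pow_two_pow_dist_lt hdense hh k hη
  have hpoint : ∀ y, ‖g y ^ 2 ^ k - h y‖ < η := fun y =>
    ((g ^ 2 ^ k - h).norm_coe_le_norm y).trans_lt (dist_eq_norm (g ^ 2 ^ k) h ▸ hg)
  have hgy : ∀ y, ‖g y‖ ^ 2 ^ k ≤ ‖h y‖ + η := fun y => by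
    have := norm_le_insert' (g y ^ 2 ^ k) (h y)
    rw [norm_pow] at this
    linarith [hpoint y]
  have hgx : 1 - η ≤ ‖g x‖ ^ 2 ^ k := by
    have := norm_sub_norm_le (h x) (h x - g x ^ 2 ^ k)
    rw [sub_sub_cancel, norm_pow, hx, norm_one, norm_sub_rev] at this
    linarith [hx ▸ hpoint x]
  have hgx0 : g x ≠ 0 := fun h0 => by
    rw [h0, norm_zero, zero_pow (by positivity)] at hgx
    linarith
  refine ⟨(g x)⁻¹ • g, A.smul_mem hgA _, by simp [hgx0], fun y => ?_⟩
  rw [ContinuousMap.smul_apply, norm_smul, norm_inv, mul_pow, inv_pow, inv_mul_eq_div]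
  exact div_le_div₀ (by positivity) (hgy y) (by linarith) hgx

end ApproximateRoots

section Bumps

variable [CompactSpace X] {A : Subalgebra ℂ C(X, ℂ)} {E : Set X} {x : X}

theorem exists_approx_peak (hx : IsPointOfContinuity A x) (hE : IsCompact E) (hxE : x ∉ E)
    (hdense : vanishIdeal A E ⊆ closure ((fun f => f * f) '' vanishIdeal A E))
    {W : Set X} (hW : IsOpen W) (hxW : x ∈ W) {c δ : ℝ} (hc : 1 < c) (hδ : 0 < δ) :
    ∃ u ∈ A, u x = 1 ∧ (∀ y, ‖u y‖ ≤ c) ∧ ∀ y ∉ W, ‖u y‖ ≤ δ := by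
  obtain ⟨f, hfA, hfx, hf0⟩ :=
    hx (E ∪ Wᶜ) (hE.union hW.isClosed_compl.isCompact) (by simp [hxE, hxW])
  obtain ⟨k, hk⟩ := pow_unbounded_of_one_lt (2 * (‖f‖ + 1)) hc
  have hck : 2 * (‖f‖ + 1) ≤ c ^ 2 ^ k :=
    hk.le.trans (pow_le_pow_right₀ hc.le Nat.lt_two_pow_self.le)
  set η := min (1 / 2) (δ ^ 2 ^ k / 2)
  have hη : 0 < η := lt_min (by norm_num) (by positivity)
  have hη2 : η ≤ 1 / 2 := min_le_left _ _
  obtain ⟨u, huA, hux, hu⟩ := exists_norm_pow_two_pow_le hdense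
    ⟨hfA, fun y hy => hf0 y (Or.inl hy)⟩ hfx k hη (by linarith)
  have hu2 : ∀ y, ‖u y‖ ^ 2 ^ k ≤ 2 * (‖f y‖ + η) := fun y =>
    (hu y).trans <| by
      rw [div_le_iff₀ (by linarith)]
      nlinarith [norm_nonneg (f y)]
  have h2k : 2 ^ k ≠ 0 := by positivity
  refine ⟨u, huA, hux, fun y => ?_, fun y hy => ?_⟩
  · refine (pow_le_pow_iff_left₀ (norm_nonneg _) (by linarith) h2k).mp ((hu2 y).trans ?_)
    linarith [f.norm_coe_le_norm y]
  · refine (pow_le_pow_iff_left₀ (norm_nonneg _) hδ.le h2k).mp ((hu2 y).trans ?_)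
    rw [hf0 y (Or.inr hy), norm_zero]
    linarith [min_le_right (1 / 2) (δ ^ 2 ^ k / 2)]

theorem exists_bump (hx : IsPointOfContinuity A x) (hE : IsCompact E) (hxE : x ∉ E)
    (hdense : vanishIdeal A E ⊆ closure ((fun f => f * f) '' vanishIdeal A E))
    {V : Set X} (hV : IsOpen V) (hxV : x ∈ V) {C : ℝ} (hC : 1 < C) :
    ∃ h ∈ A, h x = 1 ∧ (∀ y, ‖h y‖ ≤ C) ∧ ∀ y ∉ V, h y = 0 := by
  obtain ⟨f, hfA, hfx, hf0⟩ := hx Vᶜ hV.isClosed_compl.isCompact (by simpa)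
  have hc : 1 < √C := by rwa [Real.lt_sqrt zero_le_one, one_pow]
  have hW : IsOpen {y | ‖f y‖ < √C} := isOpen_lt (by fun_prop) continuous_const
  obtain ⟨u, huA, hux, hu, huW⟩ := exists_approx_peak hx hE hxE hdense hW
    (by simpa [hfx] using hc) hc (inv_pos.mpr (by positivity : 0 < ‖f‖ + 1))
  refine ⟨f * u, A.mul_mem hfA huA, by simp [hfx, hux], fun y => ?_,
    fun y hy => by simp [hf0 y hy]⟩
  rw [ContinuousMap.mul_apply, norm_mul]
  by_cases hy : ‖f y‖ < √C
  · calc ‖f y‖ * ‖u y‖ ≤ √C * √C := mul_le_mul hy.le (hu y) (norm_nonneg _) (by positivity)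
      _ = C := Real.mul_self_sqrt (by linarith)
  · calc ‖f y‖ * ‖u y‖ ≤ (‖f‖ + 1) * (‖f‖ + 1)⁻¹ :=
          mul_le_mul (by linarith [f.norm_coe_le_norm y]) (huW y hy) (norm_nonneg _)
            (by positivity)
      _ ≤ C := by rw [mul_inv_cancel₀ (by positivity)]; exact hC.le

end Bumps

section BumpSeries

def IsBumpFamily (A : Subalgebra ℂ C(X, ℂ)) (x : X) (χ : Set X → C(X, ℂ)) : Prop :=
  ∀ V, IsOpen V → x ∈ V → χ V ∈ A ∧ χ V x = 1 ∧ (∀ y, ‖χ V y‖ ≤ 5 / 4) ∧ ∀ y ∉ V, χ V y = 0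

/-- `Tₙ = ∑_{k < n} 2^{-(k+1)} χ(Vₖ)` with shrinking open sets `Vₙ`. The next bump
`2^{-(n+2)} χ(V_{n+1})` vanishes off `V_{n+1}`, where `|T_{n+1}| < 1 - (3/4) 2^{-(n+1)}`,
and has size at most `(5/8) 2^{-(n+1)}`, below that margin; so `|Tₙ| ≤ 1` for all `n`. -/
def bumpSeries (U : Set X) (χ : Set X → C(X, ℂ)) : ℕ → Set X × C(X, ℂ)
  | 0 => (U, 0)
  | n + 1 =>
    let T := (bumpSeries U χ n).2 + (2⁻¹ : ℂ) ^ (n + 1) • χ (bumpSeries U χ n).1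
    ((bumpSeries U χ n).1 ∩ {y | ‖T y‖ < 1 - 3 / 4 * 2⁻¹ ^ (n + 1)}, T)

variable {A : Subalgebra ℂ C(X, ℂ)} {x : X} {U : Set X} {χ : Set X → C(X, ℂ)}

theorem bumpSeries_succ_snd_apply (n : ℕ) (y : X) :
    (bumpSeries U χ (n + 1)).2 y =
      (bumpSeries U χ n).2 y + 2⁻¹ ^ (n + 1) * χ (bumpSeries U χ n).1 y := by
  simp [bumpSeries]

theorem bumpSeries_fst_subset (n : ℕ) : (bumpSeries U χ n).1 ⊆ U := by
  induction n with
  | zero => exact subset_rfl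
  | succ n ih => exact inter_subset_left.trans ih

theorem bumpSeries_spec (hχ : IsBumpFamily A x χ) (hU : IsOpen U) (hxU : x ∈ U) (n : ℕ) :
    IsOpen (bumpSeries U χ n).1 ∧ x ∈ (bumpSeries U χ n).1 ∧ (bumpSeries U χ n).2 ∈ A ∧
      (bumpSeries U χ n).2 x = ((1 - 2⁻¹ ^ n : ℝ) : ℂ) := by
  induction n with
  | zero => exact ⟨hU, hxU, A.zero_mem, by simp [bumpSeries]⟩
  | succ n ih =>
    obtain ⟨hVo, hVx, hTA, hTx⟩ := ih
    obtain ⟨hχA, hχx, -, -⟩ := hχ _ hVo hVx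
    have hTx' : (bumpSeries U χ (n + 1)).2 x = ((1 - 2⁻¹ ^ (n + 1) : ℝ) : ℂ) := by
      rw [bumpSeries_succ_snd_apply, hTx, hχx]
      push_cast
      ring
    have hpow : (2⁻¹ : ℝ) ^ (n + 1) ≤ 1 := pow_le_one₀ (by norm_num) (by norm_num)
    refine ⟨hVo.inter (isOpen_lt (by fun_prop) continuous_const), ⟨hVx, ?_⟩,
      A.add_mem hTA (A.smul_mem hχA _), hTx'⟩
    change ‖(bumpSeries U χ (n + 1)).2 x‖ < _
    rw [hTx', Complex.norm_real, Real.norm_of_nonneg (by linarith)]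
    linarith [pow_pos (by norm_num : (0 : ℝ) < 2⁻¹) (n + 1)]

theorem norm_bumpSeries_succ_sub_le (hχ : IsBumpFamily A x χ) (hU : IsOpen U) (hxU : x ∈ U)
    (n : ℕ) (y : X) :
    ‖(bumpSeries U χ (n + 1)).2 y - (bumpSeries U χ n).2 y‖ ≤ 2⁻¹ ^ (n + 1) * (5 / 4) := by
  obtain ⟨hVo, hVx, -, -⟩ := bumpSeries_spec hχ hU hxU n
  rw [bumpSeries_succ_snd_apply, add_sub_cancel_left, norm_mul, norm_pow, norm_inv,
    Complex.norm_two]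
  exact mul_le_mul_of_nonneg_left ((hχ _ hVo hVx).2.2.1 y) (by positivity)

theorem norm_bumpSeries_le_of_mem {n : ℕ} {y : X} (hy : y ∈ (bumpSeries U χ n).1) :
    ‖(bumpSeries U χ n).2 y‖ ≤ 1 - 3 / 4 * 2⁻¹ ^ n := by
  cases n with
  | zero => norm_num [bumpSeries]
  | succ n => exact hy.2.le

theorem norm_bumpSeries_le_one (hχ : IsBumpFamily A x χ) (hU : IsOpen U) (hxU : x ∈ U)
    (n : ℕ) (y : X) : ‖(bumpSeries U χ n).2 y‖ ≤ 1 := by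
  induction n with
  | zero => simp [bumpSeries]
  | succ n ih =>
    by_cases hy : y ∈ (bumpSeries U χ n).1
    · have h₁ := norm_bumpSeries_le_of_mem hy
      have h₂ := norm_bumpSeries_succ_sub_le hχ hU hxU n y
      have h₃ := norm_le_insert' ((bumpSeries U χ (n + 1)).2 y) ((bumpSeries U χ n).2 y)
      rw [pow_succ] at h₂
      linarith [pow_pos (by norm_num : (0 : ℝ) < 2⁻¹) n]
    · obtain ⟨hVo, hVx, -, -⟩ := bumpSeries_spec hχ hU hxU n
      rwa [bumpSeries_succ_snd_apply, (hχ _ hVo hVx).2.2.2 y hy, mul_zero, add_zero]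

theorem bumpSeries_snd_eq_zero (hχ : IsBumpFamily A x χ) (hU : IsOpen U) (hxU : x ∈ U)
    (n : ℕ) {y : X} (hy : y ∉ U) : (bumpSeries U χ n).2 y = 0 := by
  induction n with
  | zero => rfl
  | succ n ih =>
    obtain ⟨hVo, hVx, -, -⟩ := bumpSeries_spec hχ hU hxU n
    rw [bumpSeries_succ_snd_apply, ih,
      (hχ _ hVo hVx).2.2.2 y fun h => hy (bumpSeries_fst_subset n h), mul_zero, add_zero]

end BumpSeries

theorem isStrongBoundaryPoint_of_bumps [CompactSpace X] {A : Subalgebra ℂ C(X, ℂ)}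
    (hAclosed : IsClosed (A : Set C(X, ℂ))) {x : X}
    (hbump : ∀ V, IsOpen V → x ∈ V →
      ∃ h ∈ A, h x = 1 ∧ (∀ y, ‖h y‖ ≤ 5 / 4) ∧ ∀ y ∉ V, h y = 0) :
    IsStrongBoundaryPoint A x := by
  intro U hU hxU
  choose! χ hχ using hbump
  set T := fun n => (bumpSeries U χ n).2
  have hcauchy : CauchySeq T := cauchySeq_of_le_geometric_two (C := 5 / 4) fun n => by
    rw [dist_comm, dist_eq_norm]
    refine (ContinuousMap.norm_le _ (by positivity)).mpr fun y => ?_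
    refine (norm_bumpSeries_succ_sub_le hχ hU hxU n y).trans_eq ?_
    rw [inv_pow, pow_succ]
    ring
  obtain ⟨f, hf⟩ := cauchySeq_tendsto_of_complete hcauchy
  have heval (y : X) : Filter.Tendsto (fun n => T n y) Filter.atTop (nhds (f y)) :=
    ((continuous_eval_const y).tendsto f).comp hf
  refine ⟨f, hAclosed.mem_of_tendsto hf
    (.of_forall fun n => (bumpSeries_spec hχ hU hxU n).2.2.1), ?_, fun y => ?_, fun y hy => ?_⟩
  · refine tendsto_nhds_unique (heval x) ?_
    simp_rw [T, fun n => (bumpSeries_spec hχ hU hxU n).2.2.2]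
    have hlim : Filter.Tendsto (fun n : ℕ => (1 - 2⁻¹ ^ n : ℝ)) Filter.atTop (nhds 1) := by
      simpa using tendsto_const_nhds.sub
        (tendsto_pow_atTop_nhds_zero_of_lt_one (by norm_num : (0 : ℝ) ≤ 2⁻¹) (by norm_num))
    rw [← Complex.ofReal_one]
    exact (Complex.continuous_ofReal.tendsto 1).comp hlim
  · exact le_of_tendsto (heval y).norm (.of_forall fun n => norm_bumpSeries_le_one hχ hU hxU n y)
  · have hfy : f y = 0 := tendsto_nhds_unique (heval y) <| by
      simp_rw [T, bumpSeries_snd_eq_zero hχ hU hxU _ hy]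
      exact tendsto_const_nhds
    simp [hfy]

theorem strong_boundary_of_point_of_continuity_general
    {X : Type*} [TopologicalSpace X] [CompactSpace X]
    (A : Subalgebra ℂ C(X, ℂ)) (hAclosed : IsClosed (A : Set C(X, ℂ)))
    (x : X) (hx : IsPointOfContinuity A x)
    (E : Set X) (hE : IsCompact E) (hxE : x ∉ E)
    (hdense : vanishIdeal A E ⊆ closure ((fun f => f * f) '' vanishIdeal A E)) :
    IsStrongBoundaryPoint A x :=
  isStrongBoundaryPoint_of_bumps hAclosed fun _ hV hxV =>
    exists_bump hx hE hxE hdense hV hxV (by norm_num)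

/-- **Lemma 3.3.** Let `A` be a uniform algebra on a compact Hausdorff space `X` and let `x`
be a point of continuity for `A`. Suppose that `E` is a compact subset of `X \ {x}` such that
`{f² : f ∈ I(E)}` is dense in `I(E)`. Then `x` is a strong boundary point for `A`. -/
theorem strong_boundary_of_point_of_continuity
    {X : Type*} [TopologicalSpace X] [CompactSpace X] [T2Space X]
    (A : Subalgebra ℂ C(X, ℂ)) (hAclosed : IsClosed (A : Set C(X, ℂ)))
    (hAsep : ∀ x y : X, x ≠ y → ∃ f ∈ A, f x ≠ f y)
    (x : X) (hx : IsPointOfContinuity A x)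
    (E : Set X) (hE : IsCompact E) (hxE : x ∉ E)
    (hdense : vanishIdeal A E ⊆ closure ((fun f => f * f) '' vanishIdeal A E)) :
    IsStrongBoundaryPoint A x :=
  strong_boundary_of_point_of_continuity_general A hAclosed x hx E hE hxE hdense
end
end

section
/- Let A be a uniform algebra on a compact Hausdorff space X and let E be a closed subset of X such that {f² : f ∈ I(E)} is dense in I(E). Then the set S of functions g ∈ I(E) with the property that for every k ∈ ℕ there exists h ∈ A with h^(2^k) = g is dense in I(E). -/
open Filter Topology


open Set Metric Complex

noncomputable section

variable {X : Type*} [TopologicalSpace X]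

private lemma pow_approx {X : Type*} [TopologicalSpace X] [CompactSpace X]
    (a : C(X, ℂ)) (N : ℕ) (ε' : ℝ) (hε' : 0 < ε') :
    ∃ δ > 0, ∀ u : C(X, ℂ), dist u a < δ → ∀ n ≤ N, dist (u ^ n) (a ^ n) < ε' := by
  induction N with
  | zero =>
    exact ⟨1, one_pos, fun u _ n hn => by
      interval_cases n; simpa using hε'⟩
  | succ N ih =>
    obtain ⟨δ₁, hδ₁, H₁⟩ := ih
    have hc : ContinuousAt (fun u : C(X, ℂ) => u ^ (N + 1)) a := (continuous_pow _).continuousAt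
    rw [Metric.continuousAt_iff] at hc
    obtain ⟨δ₂, hδ₂, H₂⟩ := hc ε' hε'
    refine ⟨min δ₁ δ₂, lt_min hδ₁ hδ₂, fun u hu n hn => ?_⟩
    rcases Nat.le_add_one_iff.mp hn with h | rfl
    · exact H₁ u (lt_of_lt_of_le hu (min_le_left _ _)) n h
    · exact H₂ (lt_of_lt_of_le hu (min_le_right _ _))

/-- (Mittag-Leffler argument.) Let `A` be a uniform algebra on a compact Hausdorff space `X`
and let `E` be a closed subset of `X` such that `{f² : f ∈ I(E)}` is dense in `I(E)`. Then the
set `S` of functions `g ∈ I(E)` having, for every `k ∈ ℕ`, a root `h ∈ A` with `h^(2^k) = g`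
is dense in `I(E)`. -/
theorem dense_iterated_roots
    {X : Type*} [TopologicalSpace X] [CompactSpace X] [T2Space X]
    (A : Subalgebra ℂ C(X, ℂ)) (hAclosed : IsClosed (A : Set C(X, ℂ)))
    (hAsep : ∀ x y : X, x ≠ y → ∃ f ∈ A, f x ≠ f y)
    (E : Set X) (hE : IsClosed E)
    (hdense : vanishIdeal A E ⊆ closure ((fun f => f * f) '' vanishIdeal A E)) :
    vanishIdeal A E ⊆
      closure {g | g ∈ vanishIdeal A E ∧ ∀ k : ℕ, ∃ h ∈ A, h ^ (2 ^ k) = g} := by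
  classical
  intro g hg
  rw [Metric.mem_closure_iff]
  intro ε hε
  -- density of squares, metric form
  have key : ∀ a ∈ vanishIdeal A E, ∀ δ : ℝ, 0 < δ →
      ∃ u, u ∈ vanishIdeal A E ∧ dist (u * u) a < δ := by
    intro a ha δ hδ
    have h1 := hdense ha
    rw [Metric.mem_closure_iff] at h1
    obtain ⟨b, hb, hdist⟩ := h1 δ hδ
    obtain ⟨u, hu, rfl⟩ := hb
    exact ⟨u, hu, by rwa [dist_comm]⟩
  have hεk : ∀ k : ℕ, (0 : ℝ) < ε / 4 * (1 / 2) ^ k := fun k => by positivity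
  choose δf hδf Hδf using fun (a : C(X, ℂ)) (k : ℕ) =>
    pow_approx a (2 ^ k) (ε / 4 * (1 / 2) ^ k) (hεk k)
  choose! nxt hnxtV hnxt using key
  -- the recursive sequence
  let f : ℕ → C(X, ℂ) := fun k => Nat.rec g (fun k a => nxt a (δf a k)) k
  have hfsucc : ∀ k, f (k + 1) = nxt (f k) (δf (f k) k) := fun k => rfl
  have hfV : ∀ k, f k ∈ vanishIdeal A E := by
    intro k
    induction k with
    | zero => exact hg
    | succ k ih =>
      rw [hfsucc k]
      exact hnxtV (f k) ih (δf (f k) k) (hδf (f k) k)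
  have hstep : ∀ k, ∀ n ≤ 2 ^ k,
      dist ((f (k + 1) * f (k + 1)) ^ n) ((f k) ^ n) < ε / 4 * (1 / 2) ^ k := by
    intro k n hn
    refine Hδf (f k) k _ ?_ n hn
    rw [hfsucc k]
    exact hnxt (f k) (hfV k) (δf (f k) k) (hδf (f k) k)
  -- the power sequences
  set s : ℕ → ℕ → C(X, ℂ) := fun j k => f (j + k) ^ (2 ^ k) with hs
  have hsq : ∀ (u : C(X, ℂ)) (k : ℕ), u ^ (2 ^ (k + 1)) = (u * u) ^ (2 ^ k) := by
    intro u k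
    rw [show (2 : ℕ) ^ (k + 1) = 2 * 2 ^ k by ring, pow_mul, sq]
  have hdists : ∀ j k, dist (s j k) (s j (k + 1)) ≤ ε / 4 * (1 / 2) ^ j * (1 / 2) ^ k := by
    intro j k
    rw [dist_comm]
    have : s j (k + 1) = (f (j + k + 1) * f (j + k + 1)) ^ (2 ^ k) := by
      simp only [hs]
      rw [← hsq]
      congr 1
    rw [this]
    have h2 : (2 : ℕ) ^ k ≤ 2 ^ (j + k) := Nat.pow_le_pow_right (by norm_num) (by omega)
    have h3 := hstep (j + k) (2 ^ k) h2
    have heq : ε / 4 * (1 / 2 : ℝ) ^ (j + k) = ε / 4 * (1 / 2) ^ j * (1 / 2) ^ k := by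
      rw [pow_add]; ring
    rw [heq] at h3
    exact le_of_lt h3
  -- limits exist
  have hcauchy : ∀ j, CauchySeq (s j) := fun j =>
    cauchySeq_of_le_geometric (1 / 2) (ε / 4 * (1 / 2) ^ j) (by norm_num) (hdists j)
  have hlim : ∀ j, ∃ L, Tendsto (s j) atTop (𝓝 L) := fun j =>
    cauchySeq_tendsto_of_complete (hcauchy j)
  choose h hh using hlim
  -- each s j k is in A
  have hsA : ∀ j k, s j k ∈ A := fun j k => pow_mem (hfV (j + k)).1 _
  have hhA : ∀ j, h j ∈ A := fun j =>
    hAclosed.mem_of_tendsto (hh j) (Filter.Eventually.of_forall (hsA j))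
  -- h 0 vanishes on E
  have hh0V : h 0 ∈ vanishIdeal A E := by
    refine ⟨hhA 0, fun y hy => ?_⟩
    have hev : Tendsto (fun k => (s 0 k) y) atTop (𝓝 ((h 0) y)) :=
      ((continuous_eval_const y).continuousAt.tendsto).comp (hh 0)
    have hzero : ∀ k, (s 0 k) y = 0 := by
      intro k
      simp only [hs, ContinuousMap.pow_apply]
      rw [(hfV (0 + k)).2 y hy]
      exact zero_pow (by positivity)
    have : Tendsto (fun _ : ℕ => (0 : ℂ)) atTop (𝓝 ((h 0) y)) := by
      simpa [hzero] using hev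
    exact (tendsto_nhds_unique tendsto_const_nhds this).symm
  -- roots: h j ^ (2 ^ j) = h 0
  have hroot : ∀ j, (h j) ^ (2 ^ j) = h 0 := by
    intro j
    have h1 : Tendsto (fun k => (s j k) ^ (2 ^ j)) atTop (𝓝 ((h j) ^ (2 ^ j))) :=
      ((continuous_pow (2 ^ j)).continuousAt.tendsto).comp (hh j)
    have h2 : Tendsto (fun k => s 0 (j + k)) atTop (𝓝 (h 0)) := by
      have := (hh 0).comp (tendsto_add_atTop_nat j)
      refine this.congr fun k => ?_
      simp only [Function.comp]
      congr 1
      omega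
    have heq : ∀ k, (s j k) ^ (2 ^ j) = s 0 (j + k) := by
      intro k
      simp only [hs, ← pow_mul, ← pow_add]
      congr 2
      · omega
      · omega
    rw [show (fun k => (s j k) ^ (2 ^ j)) = fun k => s 0 (j + k) from funext heq] at h1
    exact tendsto_nhds_unique h1 h2
  -- distance bound
  have hd : dist g (h 0) < ε := by
    have h0 : s 0 0 = g := by
      show f (0 + 0) ^ 2 ^ 0 = g
      rw [pow_zero, pow_one]
      rfl
    have := dist_le_of_le_geometric_of_tendsto₀ (1 / 2) (ε / 4 * (1 / 2) ^ 0)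
      (by norm_num) (hdists 0) (hh 0)
    rw [h0] at this
    calc dist g (h 0) ≤ ε / 4 * (1 / 2) ^ 0 / (1 - 1 / 2) := this
      _ = ε / 2 := by norm_num; ring
      _ < ε := by linarith
  exact ⟨h 0, ⟨hh0V, fun k => ⟨h k, hhA k, hroot k⟩⟩, hd⟩
end
end

section
/- Let A be a uniform algebra on a compact Hausdorff space X, let x ∈ X be a point of continuity for A, and let E be a compact subset of X \ {x} such that {f² : f ∈ I(E)} is dense in I(E). Then for every open neighbourhood U of x there exists f ∈ A with |f|_{X\U} < 1/3, |f(x)| > 2/3, and |f|_X < 2. -/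
/-!
Take `g ∈ A` with `g x = 1` vanishing on `E ∪ Uᶜ`. Iterating the density of squares in `I(E)`
puts `g` in the closure of `{h ^ N : h ∈ I(E)}` for every `N = 2 ^ k`, so `|g|` is uniformly
approximated by `|h| ^ N` within `(1/3) ^ N`. Taking `N`-th roots turns `|g| = 0` off `U`,
`|g(x)| = 1` and `|g| ≤ ‖g‖` into `|h| < 1/3` off `U`, `|h(x)| > 2/3` (as
`(1/3) ^ N + (2/3) ^ N ≤ 1`) and `‖h‖ < 2`, once `N` is so large that `‖g‖ + 1 < 2 ^ N`.
-/
open Set Metric Complex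

noncomputable section

variable {X : Type*} [TopologicalSpace X]

theorem subset_closure_image_iterate_s10 {α : Type*} [TopologicalSpace α] {T : α → α}
    (hT : Continuous T) {S : Set α} (hS : S ⊆ closure (T '' S)) (k : ℕ) :
    S ⊆ closure (T^[k] '' S) := by
  induction k with
  | zero => simpa using subset_closure
  | succ k ih =>
    calc S ⊆ closure (T^[k] '' S) := ih
      _ ⊆ closure (T^[k] '' closure (T '' S)) := closure_mono (image_mono hS)
      _ ⊆ closure (T^[k] '' (T '' S)) :=
          closure_minimal (image_closure_subset_closure_image (hT.iterate k)) isClosed_closure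
      _ = closure (T^[k + 1] '' S) := by rw [Function.iterate_succ, image_comp]

theorem iterate_mul_self_apply {M : Type*} [Monoid M] (a : M) (k : ℕ) :
    (fun b => b * b)^[k] a = a ^ 2 ^ k := by
  induction k with
  | zero => simp
  | succ k ih => rw [Function.iterate_succ_apply', ih, ← sq, ← pow_mul, ← pow_succ]

theorem subset_closure_image_pow_two_pow {M : Type*} [Monoid M] [TopologicalSpace M]
    [ContinuousMul M] {S : Set M} (hS : S ⊆ closure ((fun b => b * b) '' S)) (k : ℕ) :
    S ⊆ closure ((· ^ 2 ^ k) '' S) := by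
  simpa only [iterate_mul_self_apply] using
    subset_closure_image_iterate_s10 (by fun_prop : Continuous fun b : M => b * b) hS k

theorem IsCompact.sSup_image_lt {β : Type*} [TopologicalSpace β] {f : β → ℝ} {K : Set β}
    (hK : IsCompact K) (hf : ContinuousOn f K) {c : ℝ} (hc : 0 < c) (h : ∀ y ∈ K, f y < c) :
    sSup (f '' K) < c := by
  rcases K.eq_empty_or_nonempty with rfl | hne
  · simpa using hc
  · exact (hK.sSup_lt_iff_of_continuous hne hf c).2 h

theorem exists_lt_two_pow_two_pow (a : ℝ) : ∃ k : ℕ, a < 2 ^ 2 ^ k := by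
  obtain ⟨k, hk⟩ := pow_unbounded_of_one_lt a one_lt_two
  exact ⟨k, hk.trans_le (pow_le_pow_right₀ one_le_two k.lt_two_pow_self.le)⟩

theorem abs_norm_pow_sub_norm_le_dist {𝕜 : Type*} [NormedDivisionRing 𝕜] [CompactSpace X]
    (h g : C(X, 𝕜)) (n : ℕ) (y : X) : |‖h y‖ ^ n - ‖g y‖| ≤ dist (h ^ n) g := by
  calc |‖h y‖ ^ n - ‖g y‖| = |‖(h ^ n) y‖ - ‖g y‖| := by simp
    _ ≤ dist ((h ^ n) y) (g y) := (abs_norm_sub_norm_le _ _).trans_eq (dist_eq_norm _ _).symm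
    _ ≤ dist (h ^ n) g := ContinuousMap.dist_apply_le_dist y

theorem gonchar_estimate_general
    {X : Type*} [TopologicalSpace X] [CompactSpace X]
    (A : Subalgebra ℂ C(X, ℂ))
    (x : X) (hx : IsPointOfContinuity A x)
    (E : Set X) (hE : IsCompact E) (hxE : x ∉ E)
    (hdense : vanishIdeal A E ⊆ closure ((fun f => f * f) '' vanishIdeal A E)) :
    ∀ U : Set X, IsOpen U → x ∈ U →
      ∃ f ∈ A, sSup ((fun y => ‖f y‖) '' Uᶜ) < 1 / 3 ∧ 2 / 3 < ‖f x‖ ∧ ‖f‖ < 2 := by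
  intro U hU hxU
  obtain ⟨g, hgA, hgx, hg0⟩ :=
    hx (E ∪ Uᶜ) (hE.union hU.isClosed_compl.isCompact) (by simp [hxE, hxU])
  have hgI : g ∈ vanishIdeal A E := ⟨hgA, fun y hy => hg0 y (.inl hy)⟩
  obtain ⟨k, hk⟩ := exists_lt_two_pow_two_pow (‖g‖ + 1)
  set N := 2 ^ k
  have hN : N ≠ 0 := by positivity
  obtain ⟨_, ⟨h, hhI, rfl⟩, hgh⟩ :=
    Metric.mem_closure_iff.mp (subset_closure_image_pow_two_pow hdense k hgI) ((1 / 3) ^ N)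
      (by positivity)
  have happrox (y : X) : |‖h y‖ ^ N - ‖g y‖| < (1 / 3) ^ N :=
    (abs_norm_pow_sub_norm_le_dist h g N y).trans_lt (dist_comm g _ ▸ hgh)
  refine ⟨h, hhI.1, ?_, ?_, ?_⟩
  · refine hU.isClosed_compl.isCompact.sSup_image_lt (by fun_prop) (by norm_num) fun y hy => ?_
    have hoff := (abs_lt.mp (happrox y)).2
    rw [hg0 y (.inr hy), norm_zero, sub_zero] at hoff
    exact lt_of_pow_lt_pow_left₀ N (by norm_num) hoff
  · have hsplit : (1 / 3 : ℝ) ^ N + (2 / 3) ^ N ≤ 1 :=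
      calc (1 / 3 : ℝ) ^ N + (2 / 3) ^ N ≤ (1 / 3 + 2 / 3) ^ N :=
            pow_add_pow_le (by norm_num) (by norm_num) hN
        _ = 1 := by norm_num
    have hat := (abs_lt.mp (happrox x)).1
    rw [hgx, norm_one] at hat
    exact lt_of_pow_lt_pow_left₀ N (norm_nonneg _) (by linarith)
  · refine (h.norm_lt_iff two_pos).2 fun y => lt_of_pow_lt_pow_left₀ N zero_le_two ?_
    have h13 : (1 / 3 : ℝ) ^ N ≤ 1 := pow_le_one₀ (by norm_num) (by norm_num)
    linarith [(abs_lt.mp (happrox y)).2, g.norm_coe_le_norm y]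

/-- (Key estimate in the proof of Lemma 3.3, towards Gonchar's criterion.) Let `A` be a
uniform algebra on a compact Hausdorff space `X`, let `x` be a point of continuity for `A`,
and let `E` be a compact subset of `X \ {x}` such that `{f² : f ∈ I(E)}` is dense in `I(E)`.
Then for every open neighbourhood `U` of `x` there is `f ∈ A` with `|f|_{X \ U} < 1/3`,
`|f(x)| > 2/3` and `|f|_X < 2`. -/
theorem gonchar_estimate
    {X : Type*} [TopologicalSpace X] [CompactSpace X] [T2Space X]
    (A : Subalgebra ℂ C(X, ℂ)) (hAclosed : IsClosed (A : Set C(X, ℂ)))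
    (hAsep : ∀ x y : X, x ≠ y → ∃ f ∈ A, f x ≠ f y)
    (x : X) (hx : IsPointOfContinuity A x)
    (E : Set X) (hE : IsCompact E) (hxE : x ∉ E)
    (hdense : vanishIdeal A E ⊆ closure ((fun f => f * f) '' vanishIdeal A E)) :
    ∀ U : Set X, IsOpen U → x ∈ U →
      ∃ f ∈ A, sSup ((fun y => ‖f y‖) '' Uᶜ) < 1 / 3 ∧ 2 / 3 < ‖f x‖ ∧ ‖f‖ < 2 :=
  gonchar_estimate_general A x hx E hE hxE hdense
end
end
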